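/- arXiv:1501.07424 — 2 statements merged into one kernel-verified Lean document; each statement's English description precedes it below -/
import Mathlib

section
/- The following are equivalent for a set X ⊆ ℕ: (i) X computes a diagonally non-computable function; (ii) for every uniformly computably enumerable family (X_e) of finite sets, X computes a function h : ℕ × ℕ → ℕ such that whenever |X_e| ≤ n, h(e,n) ∉ X_e; (iii) for every partial computable function g, X computes a total function f with f(x) ≠ g(x) whenever g(x) is defined. -/
open Classical Filter

noncomputable section

/-- Codes for partial functions recursive in an oracle. -/
inductive OCode : Type
  | zero | succ | left | right | oracle
  | pair (a b : OCode) | comp (a b : OCode) | prec (a b : OCode) | rfind' (a : OCode)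

/-- Evaluation of an oracle code with oracle `O`. -/
def OCode.eval (O : ℕ →. ℕ) : OCode → ℕ →. ℕ
  | .zero => pure 0
  | .succ => Nat.succ
  | .left => ↑fun n : ℕ => n.unpair.1
  | .right => ↑fun n : ℕ => n.unpair.2
  | .oracle => O
  | .pair a b => fun n => Nat.pair <$> a.eval O n <*> b.eval O n
  | .comp a b => fun n => b.eval O n >>= a.eval O
  | .prec a b => Nat.unpaired fun m n =>
      n.rec (a.eval O m) fun y IH => do let i ← IH; b.eval O (Nat.pair m (Nat.pair y i))
  | .rfind' a => fun n => Nat.rfind fun m => (fun k => k = 0) <$> a.eval O (Nat.pair n m)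

/-- An injective numbering of oracle codes. -/
def OCode.encodeC : OCode → ℕ
  | .zero => Nat.pair 0 0
  | .succ => Nat.pair 1 0
  | .left => Nat.pair 2 0
  | .right => Nat.pair 3 0
  | .oracle => Nat.pair 4 0
  | .pair a b => Nat.pair 5 (Nat.pair a.encodeC b.encodeC)
  | .comp a b => Nat.pair 6 (Nat.pair a.encodeC b.encodeC)
  | .prec a b => Nat.pair 7 (Nat.pair a.encodeC b.encodeC)
  | .rfind' a => Nat.pair 8 a.encodeC

/-- `f` is partial recursive in the oracle `O`. -/
def RecIn (O : ℕ →. ℕ) (f : ℕ →. ℕ) : Prop := ∃ c : OCode, c.eval O = f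

/-- The `e`-th partial function recursive in `O` (`Φ_e^O`). -/
def phi (O : ℕ →. ℕ) (e : ℕ) : ℕ →. ℕ :=
  if h : ∃ c : OCode, c.encodeC = e then h.choose.eval O else fun _ => Part.none

/-- The characteristic function of a set of naturals, as an oracle. -/
def chOracle (X : Set ℕ) : ℕ →. ℕ := fun n => Part.some (if n ∈ X then 1 else 0)

/-- A total function as an oracle. -/
def fnOracle (f : ℕ → ℕ) : ℕ →. ℕ := fun n => Part.some (f n)

/-- A two-variable total function as an oracle. -/
def pairFnOracle (f : ℕ → ℕ → ℕ) : ℕ →. ℕ :=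
  fun n => Part.some (f n.unpair.1 n.unpair.2)

/-- The Turing jump of a set `X` : the halting problem relative to `X`. -/
def jumpSet (X : Set ℕ) : Set ℕ := {e | (phi (chOracle X) e e).Dom}

/-- The effective join of two sets of naturals. -/
def joinSet (A B : Set ℕ) : Set ℕ :=
  {n | (n % 2 = 0 ∧ n / 2 ∈ A) ∨ (n % 2 = 1 ∧ n / 2 ∈ B)}

/-- The join of two oracles. -/
def joinO (O₁ O₂ : ℕ →. ℕ) : ℕ →. ℕ :=
  fun n => if n % 2 = 0 then O₁ (n / 2) else O₂ (n / 2)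

/-- Turing reducibility between sets of naturals. -/
def setLEset (A B : Set ℕ) : Prop :=
  RecIn (chOracle B) (fnOracle fun n => if n ∈ A then 1 else 0)


/-!
If `d` is d.n.c. and `g` is partial computable, then `x ↦ d (k x)` avoids `g`, where `k` is
computable and `Φ_{k x}` is the constant function with value `g x`. Conversely an avoider of the
diagonal `e ↦ Φ_e(e)` is d.n.c.; the diagonal is partial computable because `OCode.encodeC` has a
primitive recursive decoding into Mathlib's `Nat.Partrec.Code`.

To escape a uniformly c.e. family `(X_e)` of finite sets, let `g⟪e, i⟫` be the `i`-th entry of the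
`i`-th element enumerated into `X_e`, read as a list, and let `f` avoid `g`. The code of the list
`[f⟪e, 0⟫, …, f⟪e, n - 1⟫]` is not in `X_e` when `|X_e| ≤ n`: if it were the `i`-th element
enumerated, then `i < n` and its `i`-th entry `f⟪e, i⟫` would be `g⟪e, i⟫`. Conversely, escaping
the family of sets `{v | v ∈ g x}` with `n = 1` avoids `g`.
-/

theorem OCode.encodeC_injective : Function.Injective OCode.encodeC := by
  intro c d h
  induction c generalizing d <;> cases d <;> simp_all [OCode.encodeC, Nat.pair_eq_pair] <;> aesop

theorem phi_encodeC (O : ℕ →. ℕ) (c : OCode) : phi O c.encodeC = c.eval O := by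
  have h : ∃ d : OCode, d.encodeC = c.encodeC := ⟨c, rfl⟩
  rw [phi]
  exact (dif_pos h).trans (by rw [OCode.encodeC_injective h.choose_spec])

theorem phi_apply_of_not_mem_range {O : ℕ →. ℕ} {e : ℕ} (he : ¬∃ c : OCode, c.encodeC = e)
    (x : ℕ) : phi O e x = Part.none := by
  rw [phi]
  exact congrFun (dif_neg he) x

theorem recIn_iff_recursiveIn {O f : ℕ →. ℕ} : RecIn O f ↔ Nat.RecursiveIn {O} f := by
  constructor
  · rintro ⟨c, rfl⟩
    induction c with
    | zero => exact .zero
    | succ => exact .succ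
    | left => exact .left
    | right => exact .right
    | oracle => exact .oracle _ rfl
    | pair a b iha ihb => exact .pair iha ihb
    | comp a b iha ihb => exact .comp iha ihb
    | prec a b iha ihb => exact .prec iha ihb
    | rfind' a iha => exact .rfind iha
  · intro hf
    induction hf with
    | zero => exact ⟨.zero, rfl⟩
    | succ => exact ⟨.succ, rfl⟩
    | left => exact ⟨.left, rfl⟩
    | right => exact ⟨.right, rfl⟩
    | oracle g hg => exact ⟨.oracle, (Set.mem_singleton_iff.1 hg).symm⟩
    | pair _ _ iha ihb =>
      obtain ⟨a, rfl⟩ := iha; obtain ⟨b, rfl⟩ := ihb; exact ⟨.pair a b, rfl⟩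
    | comp _ _ iha ihb =>
      obtain ⟨a, rfl⟩ := iha; obtain ⟨b, rfl⟩ := ihb; exact ⟨.comp a b, rfl⟩
    | prec _ _ iha ihb =>
      obtain ⟨a, rfl⟩ := iha; obtain ⟨b, rfl⟩ := ihb; exact ⟨.prec a b, rfl⟩
    | rfind _ iha =>
      obtain ⟨a, rfl⟩ := iha; exact ⟨.rfind' a, rfl⟩

namespace RecIn

variable {O : ℕ →. ℕ}

theorem of_partrec {f : ℕ →. ℕ} (hf : Nat.Partrec f) : RecIn O f :=
  recIn_iff_recursiveIn.2 hf.recursiveIn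

theorem partrec {g : ℕ →. ℕ} (hg : RecIn (chOracle ∅) g) : Nat.Partrec g :=
  (recIn_iff_recursiveIn.1 hg).partrec_of_oracle fun _ h => by
    rw [Set.mem_singleton_iff.1 h]
    exact Nat.Partrec.zero.of_eq fun n => by simp [chOracle]; rfl

theorem comp_computable {f : ℕ →. ℕ} {k : ℕ → ℕ} (hf : RecIn O f) (hk : Computable k) :
    RecIn O fun n => f (k n) :=
  recIn_iff_recursiveIn.2 <| ((recIn_iff_recursiveIn.1 hf).comp
    (Partrec.nat_iff.1 hk.partrec).recursiveIn).of_eq fun _ => Part.bind_some _ _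

end RecIn

def OCode.const : ℕ → OCode
  | 0 => .zero
  | x + 1 => .comp .succ (OCode.const x)

theorem OCode.eval_const (O : ℕ →. ℕ) (x n : ℕ) : (OCode.const x).eval O n = Part.some x := by
  induction x with
  | zero => rfl
  | succ x ih => exact (congrArg (Part.bind · _) ih).trans (Part.bind_some _ _)

theorem primrec_encodeC_const : Primrec fun x => (OCode.const x).encodeC :=
  (Primrec.nat_rec₁ (Nat.pair 0 0) (f := fun _ r => Nat.pair 6 (Nat.pair (Nat.pair 1 0) r))
    (Primrec₂.natPair.comp (.const 6) (Primrec₂.natPair.comp (.const _) .snd))).of_eq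
    fun x => by
      induction x with
      | zero => rfl
      | succ x ih => simp only [ih]; rfl

theorem RecIn.exists_primrec_index {O g : ℕ →. ℕ} (hg : RecIn O g) :
    ∃ k : ℕ → ℕ, Primrec k ∧ ∀ x y, phi O (k x) y = g x := by
  obtain ⟨c, rfl⟩ := hg
  refine ⟨fun x => (OCode.comp c (OCode.const x)).encodeC,
    Primrec₂.natPair.comp (.const 6) (Primrec₂.natPair.comp (.const _) primrec_encodeC_const),
    fun x y => ?_⟩
  rw [phi_encodeC]
  exact (congrArg (Part.bind · _) (OCode.eval_const O x y)).trans (Part.bind_some _ _)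

open Nat.Partrec (Code)
open Nat.Partrec.Code

/-- The oracle `chOracle ∅` is the constant function `0`, and the search of `OCode.rfind'` is
Mathlib's `rfind'` started at offset `0`. -/
def OCode.toCode : OCode → Code
  | .zero | .oracle => .zero
  | .succ => .succ
  | .left => .left
  | .right => .right
  | .pair a b => .pair a.toCode b.toCode
  | .comp a b => .comp a.toCode b.toCode
  | .prec a b => .prec a.toCode b.toCode
  | .rfind' a => .comp (.rfind' a.toCode) (.pair .id .zero)

theorem OCode.eval_toCode : ∀ c : OCode, c.toCode.eval = c.eval (chOracle ∅)
  | .zero => rfl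
  | .oracle => by funext n; simp [toCode, OCode.eval, Code.eval, chOracle]; rfl
  | .succ => rfl
  | .left => rfl
  | .right => rfl
  | .pair a b => by simp [toCode, OCode.eval, Code.eval, eval_toCode a, eval_toCode b]; rfl
  | .comp a b => by simp [toCode, OCode.eval, Code.eval, eval_toCode a, eval_toCode b]; rfl
  | .prec a b => by simp [toCode, OCode.eval, Code.eval, eval_toCode a, eval_toCode b]; rfl
  | .rfind' a => by
      funext n
      simp [toCode, OCode.eval, Code.eval, eval_toCode a, Seq.seq, pure, PFun.pure, Part.map_id']

/-- `t` is the constructor tag of `OCode.encodeC`; the tags `0` and `4` (`zero` and `oracle`)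
fall through to `.zero`. -/
def decodeStep (t : ℕ) (a b c : Code) : Code :=
  if t = 1 then .succ
  else if t = 2 then .left
  else if t = 3 then .right
  else if t = 5 then .pair a b
  else if t = 6 then .comp a b
  else if t = 7 then .prec a b
  else if t = 8 then .comp (.rfind' c) (.pair .id .zero)
  else .zero

theorem Nat.unpair_snd_lt_of_fst_ne_zero {e : ℕ} (h : e.unpair.1 ≠ 0) : e.unpair.2 < e := by
  conv_rhs => rw [← Nat.pair_unpair e]
  unfold Nat.pair; split <;> nlinarith [Nat.pos_of_ne_zero h]

/-- Outside the range of `OCode.encodeC` the value is junk, which is harmless because `phi` is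
nowhere defined there. -/
def decodeCode (e : ℕ) : Code :=
  if e.unpair.1 = 0 then .zero
  else decodeStep e.unpair.1 (decodeCode e.unpair.2.unpair.1) (decodeCode e.unpair.2.unpair.2)
    (decodeCode e.unpair.2)
termination_by e
decreasing_by
  all_goals have := Nat.unpair_snd_lt_of_fst_ne_zero ‹_›
  · exact (Nat.unpair_left_le _).trans_lt this
  · exact (Nat.unpair_right_le _).trans_lt this
  · exact this

theorem decodeCode_encodeC (c : OCode) : decodeCode c.encodeC = c.toCode := by
  induction c <;> rw [decodeCode] <;> simp_all [OCode.encodeC, OCode.toCode, decodeStep]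

open Primrec in
theorem primrec_decodeStep : Primrec fun x : ℕ × Code × Code × Code =>
    decodeStep x.1 x.2.1 x.2.2.1 x.2.2.2 := by
  have ht (k : ℕ) : PrimrecPred fun x : ℕ × Code × Code × Code => x.1 = k :=
    Primrec.eq.comp fst (const k)
  have ha : Primrec fun x : ℕ × Code × Code × Code => x.2.1 := fst.comp snd
  have hb : Primrec fun x : ℕ × Code × Code × Code => x.2.2.1 := fst.comp (snd.comp snd)
  have hc : Primrec fun x : ℕ × Code × Code × Code => x.2.2.2 := snd.comp (snd.comp snd)
  unfold decodeStep
  refine .ite (ht 1) (const _) <| .ite (ht 2) (const _) <| .ite (ht 3) (const _) <|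
    .ite (ht 5) (primrec₂_pair.comp ha hb) <| .ite (ht 6) (primrec₂_comp.comp ha hb) <|
    .ite (ht 7) (primrec₂_prec.comp ha hb) <|
    .ite (ht 8) (primrec₂_comp.comp (primrec_rfind'.comp hc) (const _)) (const _)

open Primrec in
theorem primrec_decodeCode : Primrec decodeCode := by
  refine nat_omega_rec' decodeCode (m := id)
    (l := fun e => if e.unpair.1 = 0 then [] else
      [e.unpair.2.unpair.1, e.unpair.2.unpair.2, e.unpair.2])
    (g := fun e r => some (if e.unpair.1 = 0 then .zero
      else decodeStep e.unpair.1 (r.getD 0 .zero) (r.getD 1 .zero) (r.getD 2 .zero)))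
    .id ?_ ?_ ?_ ?_
  · have hp : Primrec fun e : ℕ => e.unpair.2 := snd.comp unpair
    exact .ite (Primrec.eq.comp (fst.comp unpair) (const 0)) (const []) <|
      list_cons.comp (fst.comp (unpair.comp hp)) <| list_cons.comp (snd.comp (unpair.comp hp)) <|
        list_cons.comp hp (const [])
  · have hr (i : ℕ) : Primrec fun x : ℕ × List Code => x.2.getD i .zero :=
      (list_getD _).comp snd (const i)
    have ht : Primrec fun x : ℕ × List Code => x.1.unpair.1 := fst.comp (unpair.comp fst)
    exact option_some.comp <| .ite (Primrec.eq.comp ht (const 0)) (const _) <|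
      primrec_decodeStep.comp (ht.pair ((hr 0).pair ((hr 1).pair (hr 2))))
  · intro e e' he
    split_ifs at he with h
    · simp at he
    · have := Nat.unpair_snd_lt_of_fst_ne_zero h
      simp only [List.mem_cons, List.not_mem_nil, or_false] at he
      rcases he with rfl | rfl | rfl
      · exact (Nat.unpair_left_le _).trans_lt this
      · exact (Nat.unpair_right_le _).trans_lt this
      · exact this
  · intro e
    conv_rhs => rw [decodeCode]
    split_ifs <;> simp

theorem mem_eval_decodeCode_of_mem_phi {e x y : ℕ} (h : y ∈ phi (chOracle ∅) e x) :
    y ∈ (decodeCode e).eval x := by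
  by_cases he : ∃ c : OCode, c.encodeC = e
  · obtain ⟨c, rfl⟩ := he
    rwa [decodeCode_encodeC, OCode.eval_toCode, ← phi_encodeC]
  · rw [phi_apply_of_not_mem_range he] at h
    exact absurd h (Part.notMem_none y)

theorem partrec_eval_decodeCode_diag : Nat.Partrec fun e => (decodeCode e).eval e :=
  Partrec.nat_iff.1 <| eval_part.comp primrec_decodeCode.to_comp .id

theorem partrec_phi_empty (e : ℕ) : Nat.Partrec (phi (chOracle ∅) e) := by
  by_cases he : ∃ c : OCode, c.encodeC = e
  · obtain ⟨c, rfl⟩ := he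
    exact RecIn.partrec ⟨c, (phi_encodeC _ c).symm⟩
  · exact Partrec.nat_iff.1 (Partrec.none.of_eq fun x => (phi_apply_of_not_mem_range he x).symm)

namespace Nat.Partrec.Code

def stageList (c : Code) (e : ℕ) : ℕ → List ℕ
  | 0 => []
  | s + 1 => stageList c e s ++ (List.range (s + 1)).filter fun v =>
      (evaln (s + 1) c (Nat.pair e v)).isSome ∧ (evaln s c (Nat.pair e v)).isSome = false

variable {c : Code} {e : ℕ}

theorem isSome_evaln_mono {s t n : ℕ} (hst : s ≤ t) (h : (evaln s c n).isSome) :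
    (evaln t c n).isSome := by
  obtain ⟨x, hx⟩ := Option.isSome_iff_exists.1 h
  exact Option.isSome_iff_exists.2 ⟨x, evaln_mono hst hx⟩

theorem mem_stageList {s v : ℕ} : v ∈ stageList c e s ↔ (evaln s c (Nat.pair e v)).isSome := by
  induction s with
  | zero => simp [stageList, evaln]
  | succ s ih =>
    have hlt : (evaln (s + 1) c (Nat.pair e v)).isSome → v < s + 1 := fun h =>
      (Nat.right_le_pair e v).trans_lt (evaln_bound (Option.get_mem h))
    have hmono := isSome_evaln_mono (c := c) (n := Nat.pair e v) s.le_succ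
    simp only [stageList, List.mem_append, ih, List.mem_filter, List.mem_range, decide_eq_true_eq]
    grind

theorem nodup_stageList (s : ℕ) : (stageList c e s).Nodup := by
  induction s with
  | zero => exact List.nodup_nil
  | succ s ih =>
    refine ih.append (List.nodup_range.filter _) fun v hv hv' => ?_
    simp only [List.mem_filter, decide_eq_true_eq] at hv'
    simp [mem_stageList.1 hv] at hv'

theorem stageList_prefix {s t : ℕ} (hst : s ≤ t) : stageList c e s <+: stageList c e t := by
  induction t, hst using Nat.le_induction with
  | base => exact List.prefix_rfl
  | succ t _ ih => exact ih.trans (List.prefix_append _ _)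

open _root_.Primrec in
theorem primrec_stageList (c : Code) : Primrec₂ (stageList c) := by
  have hhalt : Primrec fun p : ℕ × ℕ × ℕ => (evaln p.1 c p.2.2).isSome :=
    option_isSome.comp (primrec_evaln.comp ((fst.pair (const c)).pair (snd.comp snd)))
  have hnew : PrimrecRel fun (v : ℕ) (q : ℕ × ℕ) =>
      (evaln (q.2 + 1) c (Nat.pair q.1 v)).isSome ∧ (evaln q.2 c (Nat.pair q.1 v)).isSome = false :=
    (Primrec.eq.comp (hhalt.comp ((_root_.Primrec.succ.comp (snd.comp snd)).pair
        ((fst.comp snd).pair (Primrec₂.natPair.comp (fst.comp snd) fst)))) (const true)).and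
      (Primrec.eq.comp (hhalt.comp ((snd.comp snd).pair
        ((fst.comp snd).pair (Primrec₂.natPair.comp (fst.comp snd) fst)))) (const false))
  refine Primrec₂.mk <| (nat_rec' snd (const []) (list_append.comp (snd.comp snd)
      ((PrimrecRel.listFilter hnew).comp
        (list_range.comp (_root_.Primrec.succ.comp (fst.comp snd)))
        ((fst.comp fst).pair (fst.comp snd)))).to₂).of_eq fun p => ?_
  induction p.2 with
  | zero => rfl
  | succ s ih => simp only [ih]; rfl

/-- Well defined because the lists `stageList c e s` grow by appending. -/
def enumAt (c : Code) (e i : ℕ) : Part ℕ := Nat.rfindOpt fun s => (stageList c e s)[i]?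

theorem mem_enumAt_iff {i v : ℕ} : v ∈ enumAt c e i ↔ ∃ s, (stageList c e s)[i]? = some v := by
  refine Nat.rfindOpt_mono fun {a m n} hmn ha => ?_
  obtain ⟨t, ht⟩ := stageList_prefix (c := c) (e := e) hmn
  rw [← ht, List.getElem?_append_left (List.getElem?_eq_some_iff.1 ha).1]
  exact ha

theorem exists_lt_ncard_mem_enumAt (hfin : {v | (c.eval (Nat.pair e v)).Dom}.Finite) {v : ℕ}
    (hv : (c.eval (Nat.pair e v)).Dom) :
    ∃ i < {v | (c.eval (Nat.pair e v)).Dom}.ncard, v ∈ enumAt c e i := by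
  obtain ⟨s, hs⟩ := evaln_complete.1 (Part.get_mem hv)
  have hmem : v ∈ stageList c e s := mem_stageList.2 (Option.isSome_of_mem hs)
  have hsub : ↑(stageList c e s).toFinset ⊆ {v | (c.eval (Nat.pair e v)).Dom} := fun w hw => by
    obtain ⟨x, hx⟩ := Option.isSome_iff_exists.1 (mem_stageList.1 (List.mem_toFinset.1 hw))
    exact Part.dom_iff_mem.2 ⟨x, evaln_sound hx⟩
  refine ⟨_, ?_, mem_enumAt_iff.2 ⟨s, List.getElem?_idxOf hmem⟩⟩
  calc (stageList c e s).idxOf v < (stageList c e s).length := List.idxOf_lt_length_of_mem hmem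
    _ = (stageList c e s).toFinset.card := (List.toFinset_card_of_nodup (nodup_stageList s)).symm
    _ ≤ _ := (Set.ncard_coe_finset _).symm.trans_le (Set.ncard_le_ncard hsub hfin)

theorem partrec_enumAt (c : Code) : Partrec₂ (enumAt c) :=
  Partrec.rfindOpt <| Primrec.to_comp <| Primrec.list_getElem?.comp
    ((primrec_stageList c).comp (Primrec.fst.comp .fst) .snd) (Primrec.snd.comp .fst)

def diagonalGuess (c : Code) : ℕ →. ℕ := fun x =>
  (enumAt c x.unpair.1 x.unpair.2).map fun b => (Denumerable.ofNat (List ℕ) b).getD x.unpair.2 0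

theorem partrec_diagonalGuess (c : Code) : Nat.Partrec (diagonalGuess c) :=
  Partrec.nat_iff.1 <|
    ((partrec_enumAt c).comp (Computable.fst.comp .unpair) (Computable.snd.comp .unpair)).map
      ((Primrec.list_getD 0).comp ((Primrec.ofNat (List ℕ)).comp .snd)
        (Primrec.snd.comp (Primrec.unpair.comp .fst))).to_comp.to₂

end Nat.Partrec.Code

theorem Nat.RecursiveIn.total_comp {O : Set (ℕ →. ℕ)} {f k : ℕ → ℕ} {G : ℕ → ℕ → ℕ}
    (hf : Nat.RecursiveIn O fun n => Part.some (f n)) (hk : Computable k) (hG : Computable₂ G) :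
    Nat.RecursiveIn O fun n => Part.some (G n (f (k n))) := by
  have hk' : Nat.RecursiveIn O fun n => Part.some (k n) :=
    (Partrec.nat_iff.1 hk.partrec).recursiveIn
  have hG' : Nat.RecursiveIn O fun m => Part.some (G m.unpair.1 m.unpair.2) :=
    (Partrec.nat_iff.1
      (hG.comp (Computable.fst.comp .unpair) (Computable.snd.comp .unpair)).partrec).recursiveIn
  have hid : Nat.RecursiveIn O fun n => Part.some n := Nat.Partrec.some.recursiveIn
  refine (hG'.comp (hid.pair (hf.comp hk'))).of_eq fun n => ?_
  simp [Seq.seq]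

def guessList (f : ℕ → ℕ) (e n : ℕ) : ℕ :=
  Encodable.encode ((List.range n).map fun i => f (Nat.pair e i))

theorem RecIn.pairFnOracle_guessList {O : ℕ →. ℕ} {f : ℕ → ℕ} (hf : RecIn O (fnOracle f)) :
    RecIn O (pairFnOracle (guessList f)) := by
  have hstep := (recIn_iff_recursiveIn.1 hf).total_comp
    (k := fun q => Nat.pair q.unpair.1 q.unpair.2.unpair.1)
    (G := fun q y => Encodable.encode (Denumerable.ofNat (List ℕ) q.unpair.2.unpair.2 ++ [y]))
    (Primrec₂.natPair.comp (Primrec.fst.comp .unpair)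
      (Primrec.fst.comp (Primrec.unpair.comp (Primrec.snd.comp .unpair)))).to_comp
    (Primrec.encode.comp (Primrec.list_concat.comp ((Primrec.ofNat (List ℕ)).comp
      (Primrec.snd.comp (Primrec.unpair.comp (Primrec.snd.comp (Primrec.unpair.comp .fst)))))
      .snd)).to_comp
  refine recIn_iff_recursiveIn.2 ((Nat.RecursiveIn.zero.prec hstep).of_eq fun p => ?_)
  simp only [pairFnOracle, guessList]
  induction p.unpair.2 with
  | zero => rfl
  | succ n ih => exact (congrArg (· >>= _) ih).trans (by simp [List.range_succ])

theorem Nat.Partrec.Code.guessList_not_dom {c : Code} {f : ℕ → ℕ}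
    (hf : ∀ x, f x ∉ diagonalGuess c x) {e n : ℕ}
    (hfin : {v | (c.eval (Nat.pair e v)).Dom}.Finite)
    (hn : {v | (c.eval (Nat.pair e v)).Dom}.ncard ≤ n) :
    ¬(c.eval (Nat.pair e (guessList f e n))).Dom := by
  intro hdom
  obtain ⟨i, hi, hmem⟩ := exists_lt_ncard_mem_enumAt hfin hdom
  refine hf (Nat.pair e i) ?_
  simp only [diagonalGuess, Nat.unpair_pair]
  refine Part.mem_map_iff _ |>.2 ⟨_, hmem, ?_⟩
  simp [guessList, List.getD_eq_getElem?_getD, List.getElem?_range (hi.trans_le hn)]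

section Characterizations

variable (O : ℕ →. ℕ)

def ComputesDNC : Prop :=
  ∃ f : ℕ → ℕ, RecIn O (fnOracle f) ∧ ∀ e : ℕ, f e ∉ phi (chOracle ∅) e e

def AvoidsPartrec : Prop :=
  ∀ g : ℕ →. ℕ, RecIn (chOracle ∅) g →
    ∃ f : ℕ → ℕ, RecIn O (fnOracle f) ∧ ∀ x : ℕ, f x ∉ g x

def EscapesCEFamilies : Prop :=
  ∀ F : ℕ → Set ℕ, (∀ e, (F e).Finite) →
    (∃ c : ℕ, ∀ p : ℕ, (phi (chOracle ∅) c p).Dom ↔ p.unpair.2 ∈ F p.unpair.1) →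
    ∃ h : ℕ → ℕ → ℕ, RecIn O (pairFnOracle h) ∧ ∀ e n : ℕ, (F e).ncard ≤ n → h e n ∉ F e

variable {O}

theorem ComputesDNC.avoidsPartrec (hO : ComputesDNC O) : AvoidsPartrec O := by
  obtain ⟨d, hd, hdnc⟩ := hO
  intro g hg
  obtain ⟨k, hk, hphi⟩ := hg.exists_primrec_index
  refine ⟨fun x => d (k x), hd.comp_computable hk.to_comp, fun x hx => hdnc (k x) ?_⟩
  rwa [hphi]

theorem AvoidsPartrec.computesDNC (hO : AvoidsPartrec O) : ComputesDNC O := by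
  obtain ⟨f, hf, hav⟩ := hO _ (.of_partrec partrec_eval_decodeCode_diag)
  exact ⟨f, hf, fun e he => hav e (mem_eval_decodeCode_of_mem_phi he)⟩

theorem EscapesCEFamilies.avoidsPartrec (hO : EscapesCEFamilies O) : AvoidsPartrec O := by
  intro g hg
  have hsub (x : ℕ) : {v | v ∈ g x}.Subsingleton := fun _ hv _ hw => Part.mem_unique hv hw
  have hcheck : Partrec fun p : ℕ => (g p.unpair.1).bind fun v =>
      ((if v = p.unpair.2 then some 0 else none : Option ℕ) : Part ℕ) :=
    ((Partrec.nat_iff.2 hg.partrec).comp (Primrec.fst.comp .unpair).to_comp).bind <|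
      Computable.ofOption <| Primrec.to_comp <|
        .ite (Primrec.eq.comp .snd (Primrec.snd.comp (Primrec.unpair.comp .fst)))
          (.const _) (.const _)
  obtain ⟨c, hc⟩ := RecIn.of_partrec (O := chOracle ∅) (Partrec.nat_iff.1 hcheck)
  obtain ⟨h, hh, hesc⟩ := hO (fun x => {v | v ∈ g x}) (fun x => (hsub x).finite)
    ⟨c.encodeC, fun p => by simp [phi_encodeC, hc, Part.dom_iff_mem]⟩
  have hfn : fnOracle (fun x => h x 1) = fun x => pairFnOracle h (Nat.pair x 1) := by
    funext x; simp [pairFnOracle, fnOracle]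
  refine ⟨fun x => h x 1,
    hfn ▸ hh.comp_computable (Primrec₂.natPair.comp .id (.const 1)).to_comp,
    fun x => hesc x 1 ((Set.ncard_le_one_iff (hsub x).finite).2 fun ha hb => hsub x ha hb)⟩

theorem AvoidsPartrec.escapesCEFamilies (hO : AvoidsPartrec O) : EscapesCEFamilies O := by
  rintro F hfin ⟨c, hc⟩
  obtain ⟨cc, hcc⟩ := exists_code.1 (partrec_phi_empty c)
  have hF (e : ℕ) : F e = {v | (cc.eval (Nat.pair e v)).Dom} := by
    ext v; simpa [hcc] using (hc (Nat.pair e v)).symm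
  obtain ⟨f, hf, hav⟩ := hO _ (.of_partrec (partrec_diagonalGuess cc))
  refine ⟨guessList f, hf.pairFnOracle_guessList, fun e n hn hmem => ?_⟩
  rw [hF] at hn hmem
  exact guessList_not_dom hav (hF e ▸ hfin e) hn hmem

end Characterizations

/-- Characterizations of computing a d.n.c. function: escaping uniformly c.e.
families of finite sets of known size, and diagonalizing against partial
computable functions. -/
theorem stmt3 (X : Set ℕ) :
    ((∃ f : ℕ → ℕ, RecIn (chOracle X) (fnOracle f) ∧
        ∀ e : ℕ, f e ∉ phi (chOracle ∅) e e) ↔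
      (∀ F : ℕ → Set ℕ, (∀ e, (F e).Finite) →
        (∃ c : ℕ, ∀ p : ℕ, (phi (chOracle ∅) c p).Dom ↔ p.unpair.2 ∈ F p.unpair.1) →
        ∃ h : ℕ → ℕ → ℕ, RecIn (chOracle X) (pairFnOracle h) ∧
          ∀ e n : ℕ, (F e).ncard ≤ n → h e n ∉ F e)) ∧
    ((∃ f : ℕ → ℕ, RecIn (chOracle X) (fnOracle f) ∧
        ∀ e : ℕ, f e ∉ phi (chOracle ∅) e e) ↔
      (∀ g : ℕ →. ℕ, RecIn (chOracle ∅) g →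
        ∃ f : ℕ → ℕ, RecIn (chOracle X) (fnOracle f) ∧ ∀ x : ℕ, f x ∉ g x)) :=
  ⟨⟨fun h => (ComputesDNC.avoidsPartrec h).escapesCEFamilies,
      fun h => (EscapesCEFamilies.avoidsPartrec h).computesDNC⟩,
    ⟨ComputesDNC.avoidsPartrec, AvoidsPartrec.computesDNC⟩⟩

end
end

section
/- Small set closure: for any g : ℕ → ℕ and B ⊆ ℕ^{<ℕ}, let C = {τ ∈ ℕ^{<ℕ} : B is g-big above τ} be the g-closure of B. If B is g-small above a string σ, then C is also g-small above σ; moreover C is g-closed, i.e. whenever C is g-big above a string ρ, then ρ ∈ C. -/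
open Classical Filter

noncomputable section


/-- `T` is a finite tree `h`-bushy above `σ`: every element is increasing and
comparable with `σ`, and every non-leaf extending `σ` has at least `h(|τ|)`
immediate children. -/
def IsBushy (h : ℕ → ℕ) (σ : List ℕ) (T : Finset (List ℕ)) : Prop :=
  (∀ τ ∈ T, List.Pairwise (· < ·) τ ∧ (σ <+: τ ∨ τ <+: σ)) ∧
  ∀ τ ∈ T, σ <+: τ → (∃ x : ℕ, τ ++ [x] ∈ T) →
    h τ.length ≤ {x : ℕ | τ ++ [x] ∈ T}.ncard

/-- `B` is `h`-big above `σ`: some finite tree `h`-bushy above `σ` has all its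
leaves in `B`. -/
def BigAbove (h : ℕ → ℕ) (σ : List ℕ) (B : Set (List ℕ)) : Prop :=
  ∃ T : Finset (List ℕ), σ ∈ T ∧ IsBushy h σ T ∧
    ∀ τ ∈ T, (∀ x : ℕ, τ ++ [x] ∉ T) → τ ∈ B

/-- `B` is `h`-small above `σ`. -/
def SmallAbove (h : ℕ → ℕ) (σ : List ℕ) (B : Set (List ℕ)) : Prop :=
  ¬ BigAbove h σ B

/-! Bigness is transitive: if every leaf of a tree `h`-bushy above `ρ` is a node above which `B`
is `h`-big, then grafting the corresponding witness trees onto the leaves gives a tree witnessing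
that `B` is `h`-big above `ρ`. The grafting goes by strong induction on the tree: the subtree above
each child of `ρ` is smaller, so `B` is big above each child, and the witnesses for the children
are glued below `ρ`. Applied to `σ`, this shows that the `g`-closure of `B` is big only where `B`
itself is. -/

def LeavesIn (T : Finset (List ℕ)) (B : Set (List ℕ)) : Prop :=
  ∀ τ ∈ T, (∀ x : ℕ, τ ++ [x] ∉ T) → τ ∈ B

lemma eq_of_append_singleton_prefix {ρ τ : List ℕ} {x y : ℕ} (hx : ρ ++ [x] <+: τ)
    (hy : ρ ++ [y] <+: τ) : x = y := by
  have := (List.prefix_of_prefix_length_le hx hy (by simp)).eq_of_length (by simp)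
  simpa using this

lemma finite_setOf_append_mem (τ : List ℕ) (T : Finset (List ℕ)) :
    {x : ℕ | τ ++ [x] ∈ T}.Finite :=
  T.finite_toSet.preimage fun _ _ _ _ h => by simpa using h

lemma append_mem_filter_prefix_iff {π τ : List ℕ} (T : Finset (List ℕ)) (hπτ : π <+: τ)
    (x : ℕ) : τ ++ [x] ∈ T.filter (π <+: ·) ↔ τ ++ [x] ∈ T := by
  simpa using fun _ => hπτ.trans (List.prefix_append τ [x])

lemma IsBushy.filter_prefix {h : ℕ → ℕ} {σ π : List ℕ} {T : Finset (List ℕ)}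
    (hT : IsBushy h σ T) (hσπ : σ <+: π) : IsBushy h π (T.filter (π <+: ·)) := by
  refine ⟨fun τ hτ => ?_, fun τ hτ hπτ hchild => ?_⟩
  · rw [Finset.mem_filter] at hτ
    exact ⟨(hT.1 τ hτ.1).1, Or.inl hτ.2⟩
  · simp only [append_mem_filter_prefix_iff T hπτ] at hchild ⊢
    exact hT.2 τ (Finset.mem_filter.1 hτ).1 (hσπ.trans hπτ) hchild

lemma LeavesIn.filter_prefix {T : Finset (List ℕ)} {B : Set (List ℕ)} (hT : LeavesIn T B)
    (π : List ℕ) : LeavesIn (T.filter (π <+: ·)) B := by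
  intro τ hτ hleaf
  rw [Finset.mem_filter] at hτ
  simp only [append_mem_filter_prefix_iff T hτ.2] at hleaf
  exact hT τ hτ.1 hleaf

/-- A witness tree may contain prefixes of `σ`; discarding them makes witnesses above distinct
children of a node live in disjoint cones, so that they can be glued. -/
lemma BigAbove.exists_forall_prefix {h : ℕ → ℕ} {σ : List ℕ} {B : Set (List ℕ)}
    (hB : BigAbove h σ B) :
    ∃ T : Finset (List ℕ), σ ∈ T ∧ IsBushy h σ T ∧ LeavesIn T B ∧ ∀ τ ∈ T, σ <+: τ := by
  obtain ⟨T, hσ, hT, hleaves⟩ := hB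
  exact ⟨T.filter (σ <+: ·), by simpa using hσ, hT.filter_prefix (List.prefix_refl σ),
    LeavesIn.filter_prefix hleaves σ, fun τ hτ => (Finset.mem_filter.1 hτ).2⟩

lemma bigAbove_of_forall_bigAbove_append {h : ℕ → ℕ} {ρ : List ℕ} {B : Set (List ℕ)}
    (X : Finset ℕ) (hρ : ρ.Pairwise (· < ·)) (hX : X.Nonempty) (hcard : h ρ.length ≤ X.card)
    (hchildren : ∀ x ∈ X, BigAbove h (ρ ++ [x]) B) : BigAbove h ρ B := by
  choose! S hSρ hS hSB hSprefix using fun x hx => (hchildren x hx).exists_forall_prefix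
  set U := insert ρ (X.biUnion S)
  have mem_U_of_mem {x : ℕ} (hx : x ∈ X) {τ : List ℕ} (hτ : τ ∈ S x) : τ ∈ U :=
    Finset.mem_insert_of_mem (Finset.mem_biUnion.2 ⟨x, hx, hτ⟩)
  have mem_U_iff {x : ℕ} (hx : x ∈ X) {τ : List ℕ} (hxτ : ρ ++ [x] <+: τ) :
      τ ∈ U ↔ τ ∈ S x := by
    refine ⟨fun hτ => ?_, mem_U_of_mem hx⟩
    rcases Finset.mem_insert.1 hτ with rfl | hτ
    · simpa using hxτ.length_le
    obtain ⟨y, hy, hτy⟩ := Finset.mem_biUnion.1 hτ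
    rwa [eq_of_append_singleton_prefix hxτ (hSprefix y hy τ hτy)]
  have mem_U_cases {τ : List ℕ} (hτ : τ ∈ U) : τ = ρ ∨ ∃ x ∈ X, τ ∈ S x := by
    simpa [U] using hτ
  refine ⟨U, Finset.mem_insert_self ρ _, ⟨fun τ hτ => ?_, fun τ hτ _ hchild => ?_⟩, ?_⟩
  · rcases mem_U_cases hτ with rfl | ⟨x, hx, hτ⟩
    · exact ⟨hρ, Or.inl (List.prefix_refl τ)⟩
    · exact ⟨((hS x hx).1 τ hτ).1,
        Or.inl ((List.prefix_append ρ [x]).trans (hSprefix x hx τ hτ))⟩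
  · rcases mem_U_cases hτ with rfl | ⟨x, hx, hτ⟩
    · have hXU : (X : Set ℕ) ⊆ {x : ℕ | τ ++ [x] ∈ U} :=
        fun x hx => mem_U_of_mem hx (hSρ x hx)
      calc h τ.length ≤ X.card := hcard
        _ = (X : Set ℕ).ncard := (Set.ncard_coe_finset X).symm
        _ ≤ _ := Set.ncard_le_ncard hXU (finite_setOf_append_mem τ U)
    · have hxτ := hSprefix x hx τ hτ
      have hchildren_eq : ∀ y, τ ++ [y] ∈ U ↔ τ ++ [y] ∈ S x :=
        fun y => mem_U_iff hx (hxτ.trans (List.prefix_append τ [y]))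
      simp only [hchildren_eq] at hchild ⊢
      exact (hS x hx).2 τ hτ hxτ hchild
  · intro τ hτ hleaf
    rcases mem_U_cases hτ with rfl | ⟨x, hx, hτ⟩
    · obtain ⟨x, hx⟩ := hX
      exact absurd (mem_U_of_mem hx (hSρ x hx)) (hleaf x)
    · have hxτ := hSprefix x hx τ hτ
      exact hSB x hx τ hτ fun y hy =>
        hleaf y ((mem_U_iff hx (hxτ.trans (List.prefix_append τ [y]))).2 hy)

theorem BigAbove.of_leavesIn {h : ℕ → ℕ} {ρ : List ℕ} {B : Set (List ℕ)} {T : Finset (List ℕ)}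
    (hρ : ρ ∈ T) (hT : IsBushy h ρ T) (hleaves : LeavesIn T {τ | BigAbove h τ B}) :
    BigAbove h ρ B := by
  induction T using Finset.strongInduction generalizing ρ with
  | H T ih =>
  by_cases hleaf : ∀ x : ℕ, ρ ++ [x] ∉ T
  · exact hleaves ρ hρ hleaf
  push Not at hleaf
  set X := (finite_setOf_append_mem ρ T).toFinset
  have hX : X.Nonempty := by simpa [X, Set.Nonempty] using hleaf
  have hcard : h ρ.length ≤ X.card := by
    simpa [X, Set.ncard_eq_toFinset_card _ (finite_setOf_append_mem ρ T)] using
      hT.2 ρ hρ (List.prefix_refl ρ) hleaf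
  refine bigAbove_of_forall_bigAbove_append X (hT.1 ρ hρ).1 hX hcard fun x hx => ?_
  have hsub : T.filter (ρ ++ [x] <+: ·) ⊂ T :=
    Finset.filter_ssubset.2 ⟨ρ, hρ, fun hprefix => by simpa using hprefix.length_le⟩
  exact ih _ hsub (by simpa [X] using hx) (hT.filter_prefix (List.prefix_append ρ [x]))
    (hleaves.filter_prefix _)

theorem BigAbove.of_bigAbove_closure {h : ℕ → ℕ} {ρ : List ℕ} {B : Set (List ℕ)}
    (hC : BigAbove h ρ {τ | BigAbove h τ B}) : BigAbove h ρ B :=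
  let ⟨_, hρ, hT, hleaves⟩ := hC
  of_leavesIn hρ hT hleaves

/-- Small set closure: if `B` is `g`-small above `σ` then its `g`-closure is
`g`-small above `σ` and `g`-closed. -/
theorem stmt9 (g : ℕ → ℕ) (B : Set (List ℕ)) (σ : List ℕ)
    (hsmall : SmallAbove g σ B) :
    SmallAbove g σ {τ : List ℕ | BigAbove g τ B} ∧
    ∀ ρ : List ℕ, BigAbove g ρ {τ : List ℕ | BigAbove g τ B} →
      BigAbove g ρ B :=
  ⟨fun hC => hsmall hC.of_bigAbove_closure, fun _ => BigAbove.of_bigAbove_closure⟩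

end
end
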